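/- If the switched system x(k+1) = A_{σ(k)} x(k) + B_{σ(k)} u(k) is current-mode-dependent memory-feedback stabilizable (DFS_m), then there exists a static mode-dependent feedback Φ_d : Σ × ℝⁿ → ℝ^m, with Φ_d(i, ·) homogeneous of degree one for each i ∈ Σ (Φ_d(i, λx) = λΦ_d(i, x) for all λ ∈ ℝ, x ∈ ℝⁿ), and constants M > 0, γ̃ ∈ [0,1) such that every solution of the closed loop x(k+1) = A_{σ(k)} x(k) + B_{σ(k)} Φ_d(σ(k), x(k)) satisfies ‖x(k)‖ ≤ M γ̃^k ‖x(0)‖ for every initial state, every switching signal σ : ℕ → Σ and every k ∈ ℕ. -/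

import Mathlib

/-!
Let `γ < γ₁ < γ₂ < 1`. The worst-case cost of steering `x` with memory controllers,
`V x = ⨅ Ψ, ⨆ σ k, ‖φ(k, σ, x, Ψ)‖ / γ₁ ^ k`, lies between `‖x‖` and `M ‖x‖` and is absolutely
homogeneous, since rescaling a controller rescales its trajectories. Shifting time by one step
shows `V (A i x + B i u) ≤ γ₁ · cost(Ψ, x)` when `u` is the first input of `Ψ`, so a near-optimal
`Ψ` provides `u` with `V (A i x + B i u) ≤ γ₂ V x`. Choosing such `u` on one representative of
each line through the origin and extending by scaling gives a homogeneous static feedback along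
which `V` decays like `γ₂ ^ k`.
-/

open Matrix Filter ENNReal

noncomputable section

/-- State history `[x(k), …, x(0)]` of the closed loop driven by the reversed
mode list `[i_{k-1}, …, i_0]`, under a current-mode-dependent memory controller `Ψd`
(which also sees the current mode). -/
def memHistD {n m : ℕ} {S : Type*} (A : S → Matrix (Fin n) (Fin n) ℝ)
    (B : S → Matrix (Fin n) (Fin m) ℝ)
    (Ψd : List (EuclideanSpace ℝ (Fin n)) → List S → EuclideanSpace ℝ (Fin m))
    (x0 : EuclideanSpace ℝ (Fin n)) : List S → List (EuclideanSpace ℝ (Fin n))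
  | [] => [x0]
  | i :: is =>
      WithLp.toLp 2 ((A i).mulVec ((memHistD A B Ψd x0 is).headD 0) +
        (B i).mulVec (Ψd (memHistD A B Ψd x0 is) (i :: is))) :: memHistD A B Ψd x0 is

/-- Closed-loop solution `φ(k, σ, x₀, Ψd)` under the switching signal `σ`:
at each step, `Ψd` receives the current and past states `(x(k), …, x(0))`
and the current and past modes `(σ(k), …, σ(0))`. -/
def memTrajD {n m : ℕ} {S : Type*} (A : S → Matrix (Fin n) (Fin n) ℝ)
    (B : S → Matrix (Fin n) (Fin m) ℝ)
    (Ψd : List (EuclideanSpace ℝ (Fin n)) → List S → EuclideanSpace ℝ (Fin m))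
    (x0 : EuclideanSpace ℝ (Fin n)) (σ : ℕ → S) (k : ℕ) : EuclideanSpace ℝ (Fin n) :=
  (memHistD A B Ψd x0 (((List.range k).reverse).map σ)).headD 0

section HomogeneousSelection

variable {K E F : Type*} [Field K] [AddCommGroup E] [Module K E] [AddCommGroup F] [Module K F]

theorem exists_line_representative :
    ∃ (r : E → E) (s : E → K), (∀ c : K, c ≠ 0 → ∀ x, r (c • x) = r x) ∧
      ∀ x, x ≠ 0 → r x ≠ 0 ∧ x = s x • r x := by
  classical
  refine ⟨fun x => if hx : x = 0 then 0 else (Projectivization.mk K x hx).rep,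
    fun x => if hx : x = 0 then 0 else
      ((Projectivization.exists_smul_eq_mk_rep K x hx).choose⁻¹ : Kˣ), ?_, ?_⟩
  · intro c hc x
    by_cases hx : x = 0
    · simp [hx]
    have hcx : c • x ≠ 0 := smul_ne_zero hc hx
    simp only [dif_neg hx, dif_neg hcx]
    congr 1
    exact (Projectivization.mk_eq_mk_iff' K _ _ hcx hx).2 ⟨c, rfl⟩
  · intro x hx
    simp only [dif_neg hx]
    refine ⟨Projectivization.rep_nonzero _, ?_⟩
    rw [← Units.smul_def]
    exact (inv_smul_smul _ x).symm.trans
      (congrArg _ (Projectivization.exists_smul_eq_mk_rep K x hx).choose_spec)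

theorem exists_homogeneous_selection (P : E → F → Prop) (h0 : P 0 0)
    (hsmul : ∀ c : K, c ≠ 0 → ∀ x u, P x u → P (c • x) (c • u))
    (hex : ∀ x, x ≠ 0 → ∃ u, P x u) :
    ∃ Φ : E → F, (∀ (c : K) x, Φ (c • x) = c • Φ x) ∧ ∀ x, P x (Φ x) := by
  classical
  obtain ⟨r, s, hr_smul, hr⟩ := exists_line_representative (K := K) (E := E)
  have hex' : ∀ x, ∃ u, x ≠ 0 → P x u := fun x =>
    if hx : x = 0 then ⟨0, absurd hx⟩ else (hex x hx).imp fun _ h _ => h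
  choose u hu using hex'
  have hs_smul : ∀ c : K, c ≠ 0 → ∀ x, x ≠ 0 → s (c • x) = c * s x := by
    intro c hc x hx
    refine smul_left_injective K (hr x hx).1 ?_
    calc s (c • x) • r x = s (c • x) • r (c • x) := by rw [hr_smul c hc]
      _ = c • x := ((hr (c • x) (smul_ne_zero hc hx)).2).symm
      _ = c • s x • r x := by rw [← (hr x hx).2]
      _ = (c * s x) • r x := smul_smul _ _ _
  refine ⟨fun x => if x = 0 then 0 else s x • u (r x), fun c x => ?_, fun x => ?_⟩
  · by_cases hcx : c • x = 0
    · obtain rfl | rfl := smul_eq_zero.1 hcx <;> simp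
    obtain ⟨hc, hx⟩ := smul_ne_zero_iff.1 hcx
    simp only [if_neg hcx, if_neg hx, hs_smul c hc x hx, hr_smul c hc, smul_smul]
  · by_cases hx : x = 0
    · simpa [hx] using h0
    have hsx : s x ≠ 0 := by
      rintro h
      exact hx (by rw [(hr x hx).2, h, zero_smul])
    simp only [if_neg hx]
    convert hsmul (s x) hsx _ _ (hu (r x) (hr x hx).1)
    exact (hr x hx).2

end HomogeneousSelection

theorem norm_le_of_lyapunov {E : Type*} [SeminormedAddCommGroup E] {V : E → ℝ≥0∞} {M γ : ℝ}
    (hM : 0 ≤ M) (hγ : 0 ≤ γ) (hlow : ∀ x, ‖x‖ₑ ≤ V x)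
    (hup : ∀ x, V x ≤ ENNReal.ofReal M * ‖x‖ₑ) {x : ℕ → E}
    (hstep : ∀ k, V (x (k + 1)) ≤ ENNReal.ofReal γ * V (x k)) (k : ℕ) :
    ‖x k‖ ≤ M * γ ^ k * ‖x 0‖ := by
  have hV : V (x k) ≤ ENNReal.ofReal γ ^ k * V (x 0) := by
    induction k with
    | zero => simp
    | succ k ih => calc
        V (x (k + 1)) ≤ ENNReal.ofReal γ * V (x k) := hstep k
        _ ≤ ENNReal.ofReal γ * (ENNReal.ofReal γ ^ k * V (x 0)) := by gcongr
        _ = ENNReal.ofReal γ ^ (k + 1) * V (x 0) := by ring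
  rw [← ENNReal.ofReal_le_ofReal_iff (by positivity), ofReal_norm]
  calc ‖x k‖ₑ ≤ ENNReal.ofReal γ ^ k * (ENNReal.ofReal M * ‖x 0‖ₑ) :=
        (hlow _).trans (hV.trans (by gcongr; exact hup _))
    _ = ENNReal.ofReal (M * γ ^ k * ‖x 0‖) := by
        rw [ENNReal.ofReal_mul (by positivity), ENNReal.ofReal_mul hM, ENNReal.ofReal_pow hγ,
          ofReal_norm]
        ring

theorem List.headD_append_of_ne_nil {α : Type*} {l : List α} (hl : l ≠ []) (t : List α) (d : α) :
    (l ++ t).headD d = l.headD d := by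
  obtain ⟨a, l, rfl⟩ := List.exists_cons_of_ne_nil hl
  rfl

theorem List.headD_map_smul {R M : Type*} [Zero M] [SMulZeroClass R M] (c : R) (l : List M) :
    (l.map (c • ·)).headD 0 = c • l.headD 0 := by
  cases l <;> simp

section ClosedLoop

variable {n m : ℕ} {S : Type*} (A : S → Matrix (Fin n) (Fin n) ℝ)
  (B : S → Matrix (Fin n) (Fin m) ℝ)

def modeStep (i : S) (x : EuclideanSpace ℝ (Fin n)) (u : EuclideanSpace ℝ (Fin m)) :
    EuclideanSpace ℝ (Fin n) :=
  WithLp.toLp 2 (A i *ᵥ x + B i *ᵥ u)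

theorem modeStep_smul (i : S) (c : ℝ) (x : EuclideanSpace ℝ (Fin n))
    (u : EuclideanSpace ℝ (Fin m)) : modeStep A B i (c • x) (c • u) = c • modeStep A B i x u := by
  simp only [modeStep, WithLp.ofLp_smul, mulVec_smul, ← smul_add, WithLp.toLp_smul]

variable (Ψ : List (EuclideanSpace ℝ (Fin n)) → List S → EuclideanSpace ℝ (Fin m))
  (x0 : EuclideanSpace ℝ (Fin n))

theorem memHistD_cons (i : S) (is : List S) :
    memHistD A B Ψ x0 (i :: is) =
      modeStep A B i ((memHistD A B Ψ x0 is).headD 0) (Ψ (memHistD A B Ψ x0 is) (i :: is)) ::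
        memHistD A B Ψ x0 is := rfl

theorem memHistD_ne_nil (is : List S) : memHistD A B Ψ x0 is ≠ [] := by
  cases is <;> simp [memHistD]

theorem memTrajD_zero (σ : ℕ → S) : memTrajD A B Ψ x0 σ 0 = x0 := rfl

theorem memHistD_smul (c : ℝ) (is : List S) :
    memHistD A B (fun l js => c • Ψ (l.map (c⁻¹ • ·)) js) (c • x0) is
      = (memHistD A B Ψ x0 is).map (c • ·) := by
  induction is with
  | nil => rfl
  | cons i is ih =>
    rw [memHistD_cons, memHistD_cons, ih, List.map_cons, List.headD_map_smul, modeStep_smul]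
    congr 1
    rcases eq_or_ne c 0 with rfl | hc
    · simp
    · simp [Function.comp_def, smul_smul, inv_mul_cancel₀ hc]

theorem memTrajD_smul (c : ℝ) (σ : ℕ → S) (k : ℕ) :
    memTrajD A B (fun l js => c • Ψ (l.map (c⁻¹ • ·)) js) (c • x0) σ k
      = c • memTrajD A B Ψ x0 σ k := by
  rw [memTrajD, memHistD_smul, List.headD_map_smul, memTrajD]

theorem memHistD_append_singleton (i : S) (is : List S) :
    memHistD A B Ψ x0 (is ++ [i])
      = memHistD A B (fun l js => Ψ (l ++ [x0]) (js ++ [i])) (modeStep A B i x0 (Ψ [x0] [i])) is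
          ++ [x0] := by
  induction is with
  | nil => rfl
  | cons i' is ih =>
    rw [List.cons_append, memHistD_cons, memHistD_cons, ih,
      List.headD_append_of_ne_nil (memHistD_ne_nil A B _ _ _)]
    rfl

theorem memTrajD_shift (i : S) (σ : ℕ → S) (k : ℕ) :
    memTrajD A B (fun l js => Ψ (l ++ [x0]) (js ++ [i])) (modeStep A B i x0 (Ψ [x0] [i])) σ k
      = memTrajD A B Ψ x0 (fun j => Nat.casesOn j i σ) (k + 1) := by
  have hmodes : ((List.range (k + 1)).reverse).map (fun j => Nat.casesOn j i σ)
      = ((List.range k).reverse).map σ ++ [i] := by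
    rw [List.range_succ_eq_map, List.reverse_cons, List.map_append, List.map_reverse,
      List.map_map, List.map_reverse]
    rfl
  unfold memTrajD
  rw [hmodes, memHistD_append_singleton, List.headD_append_of_ne_nil (memHistD_ne_nil A B _ _ _)]

end ClosedLoop

section ValueFunction

variable {n m : ℕ} {S : Type*} (A : S → Matrix (Fin n) (Fin n) ℝ)
  (B : S → Matrix (Fin n) (Fin m) ℝ) (ρ : ℝ≥0∞)

def memCost (Ψ : List (EuclideanSpace ℝ (Fin n)) → List S → EuclideanSpace ℝ (Fin m))
    (x : EuclideanSpace ℝ (Fin n)) : ℝ≥0∞ :=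
  ⨆ (σ : ℕ → S) (k : ℕ), ‖memTrajD A B Ψ x σ k‖ₑ / ρ ^ k

def memValue (x : EuclideanSpace ℝ (Fin n)) : ℝ≥0∞ :=
  ⨅ Ψ, memCost A B ρ Ψ x

theorem enorm_le_memValue [Nonempty S] (x : EuclideanSpace ℝ (Fin n)) :
    ‖x‖ₑ ≤ memValue A B ρ x :=
  le_iInf fun Ψ => le_iSup₂_of_le (fun _ => Classical.arbitrary S) 0
    (by rw [memTrajD_zero, pow_zero, div_one])

theorem memValue_le_of_forall_norm_le {M γ : ℝ} (hM : 0 ≤ M) (hγ : 0 ≤ γ)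
    (hγρ : ENNReal.ofReal γ ≤ ρ)
    {Ψ : List (EuclideanSpace ℝ (Fin n)) → List S → EuclideanSpace ℝ (Fin m)}
    {x : EuclideanSpace ℝ (Fin n)} (hΨ : ∀ σ k, ‖memTrajD A B Ψ x σ k‖ ≤ M * γ ^ k * ‖x‖) :
    memValue A B ρ x ≤ ENNReal.ofReal M * ‖x‖ₑ := by
  refine iInf_le_of_le Ψ (iSup₂_le fun σ k => ENNReal.div_le_of_le_mul ?_)
  calc ‖memTrajD A B Ψ x σ k‖ₑ ≤ ENNReal.ofReal (M * γ ^ k * ‖x‖) := by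
        rw [← ofReal_norm]; exact ENNReal.ofReal_le_ofReal (hΨ σ k)
    _ = ENNReal.ofReal M * ‖x‖ₑ * ENNReal.ofReal γ ^ k := by
        rw [ENNReal.ofReal_mul (by positivity), ENNReal.ofReal_mul hM, ENNReal.ofReal_pow hγ,
          ofReal_norm]
        ring
    _ ≤ ENNReal.ofReal M * ‖x‖ₑ * ρ ^ k := by gcongr

theorem memValue_smul_le (c : ℝ) (x : EuclideanSpace ℝ (Fin n)) :
    memValue A B ρ (c • x) ≤ ‖c‖ₑ * memValue A B ρ x := by
  simp only [memValue]
  rw [ENNReal.mul_iInf (by simp)]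
  refine le_iInf fun Ψ => iInf_le_of_le (fun l js => c • Ψ (l.map (c⁻¹ • ·)) js) ?_
  simp only [memCost, memTrajD_smul, enorm_smul, ENNReal.mul_iSup, mul_div_assoc, le_refl]

theorem memValue_smul {c : ℝ} (hc : c ≠ 0) (x : EuclideanSpace ℝ (Fin n)) :
    memValue A B ρ (c • x) = ‖c‖ₑ * memValue A B ρ x := by
  refine le_antisymm (memValue_smul_le A B ρ c x) ?_
  calc ‖c‖ₑ * memValue A B ρ x = ‖c‖ₑ * memValue A B ρ (c⁻¹ • c • x) := by
        rw [inv_smul_smul₀ hc]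
    _ ≤ ‖c‖ₑ * (‖c⁻¹‖ₑ * memValue A B ρ (c • x)) := by gcongr; exact memValue_smul_le A B ρ _ _
    _ = memValue A B ρ (c • x) := by
        rw [← mul_assoc, ← enorm_mul, mul_inv_cancel₀ hc, enorm_one, one_mul]

theorem memValue_zero : memValue A B ρ 0 = 0 := by
  simpa using memValue_smul_le A B ρ 0 0

theorem memValue_modeStep_le_memCost (hρ0 : ρ ≠ 0) (hρ : ρ ≠ ⊤)
    (Ψ : List (EuclideanSpace ℝ (Fin n)) → List S → EuclideanSpace ℝ (Fin m))
    (i : S) (x : EuclideanSpace ℝ (Fin n)) :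
    memValue A B ρ (modeStep A B i x (Ψ [x] [i])) ≤ ρ * memCost A B ρ Ψ x := by
  refine iInf_le_of_le (fun l js => Ψ (l ++ [x]) (js ++ [i])) (iSup₂_le fun σ k => ?_)
  rw [memTrajD_shift]
  calc ‖memTrajD A B Ψ x (fun j => Nat.casesOn j i σ) (k + 1)‖ₑ / ρ ^ k
      = ρ * (‖memTrajD A B Ψ x (fun j => Nat.casesOn j i σ) (k + 1)‖ₑ / ρ ^ (k + 1)) := by
        rw [pow_succ', ← mul_div_assoc, ENNReal.mul_div_mul_left _ _ hρ0 hρ]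
    _ ≤ ρ * memCost A B ρ Ψ x := by
        gcongr
        exact le_iSup₂_of_le (fun j => Nat.casesOn j i σ) (k + 1) le_rfl

theorem exists_memValue_modeStep_le (hρ0 : ρ ≠ 0) (hρ : ρ ≠ ⊤) {ρ' : ℝ≥0∞} (hρρ' : ρ < ρ')
    (i : S) {x : EuclideanSpace ℝ (Fin n)} (hx0 : memValue A B ρ x ≠ 0)
    (hx : memValue A B ρ x ≠ ⊤) :
    ∃ u, memValue A B ρ (modeStep A B i x u) ≤ ρ' * memValue A B ρ x := by
  have hgain : 1 < ρ' / ρ := (ENNReal.lt_div_iff_mul_lt (.inl hρ0) (.inl hρ)).2 (by rwa [one_mul])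
  have hlt : memValue A B ρ x < ρ' / ρ * memValue A B ρ x := by
    simpa using ENNReal.mul_lt_mul_left hx0 hx hgain
  obtain ⟨Ψ, hΨ⟩ := iInf_lt_iff.1 hlt
  refine ⟨Ψ [x] [i], ?_⟩
  calc memValue A B ρ (modeStep A B i x (Ψ [x] [i])) ≤ ρ * memCost A B ρ Ψ x :=
        memValue_modeStep_le_memCost A B ρ hρ0 hρ Ψ i x
    _ ≤ ρ * (ρ' / ρ * memValue A B ρ x) := by gcongr
    _ = ρ' * memValue A B ρ x := by rw [← mul_assoc, ENNReal.mul_div_cancel hρ0 hρ]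

end ValueFunction

theorem dfs_mem_implies_homogeneous_static_general {n m : ℕ} {S : Type*} [Nonempty S]
    (A : S → Matrix (Fin n) (Fin n) ℝ) (B : S → Matrix (Fin n) (Fin m) ℝ)
    (h : ∃ M > (0 : ℝ), ∃ γ ∈ Set.Ico (0 : ℝ) 1,
      ∃ Ψd : List (EuclideanSpace ℝ (Fin n)) → List S → EuclideanSpace ℝ (Fin m),
        ∀ (x0 : EuclideanSpace ℝ (Fin n)) (σ : ℕ → S) (k : ℕ),
          ‖memTrajD A B Ψd x0 σ k‖ ≤ M * γ ^ k * ‖x0‖) :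
    ∃ Φd : S → EuclideanSpace ℝ (Fin n) → EuclideanSpace ℝ (Fin m),
      (∀ (i : S) (lam : ℝ) (x : EuclideanSpace ℝ (Fin n)), Φd i (lam • x) = lam • Φd i x) ∧
      ∃ M > (0 : ℝ), ∃ γ' ∈ Set.Ico (0 : ℝ) 1,
        ∀ (x : ℕ → EuclideanSpace ℝ (Fin n)) (σ : ℕ → S),
          (∀ k, x (k + 1) = (A (σ k)).mulVec (x k) + (B (σ k)).mulVec (Φd (σ k) (x k))) →
          ∀ k, ‖x k‖ ≤ M * γ' ^ k * ‖x 0‖ := by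
  obtain ⟨M, hM, γ, ⟨hγ0, hγ1⟩, Ψd, hΨd⟩ := h
  obtain ⟨γ₁, hγγ₁, hγ₁1⟩ := exists_between hγ1
  obtain ⟨γ₂, hγ₁γ₂, hγ₂1⟩ := exists_between hγ₁1
  have hγ₁0 : 0 < γ₁ := hγ0.trans_lt hγγ₁
  set V := memValue A B (ENNReal.ofReal γ₁)
  have hlow : ∀ x, ‖x‖ₑ ≤ V x := enorm_le_memValue A B _
  have hup : ∀ x, V x ≤ ENNReal.ofReal M * ‖x‖ₑ := fun x =>
    memValue_le_of_forall_norm_le A B _ hM.le hγ0 (ENNReal.ofReal_le_ofReal hγγ₁.le) (hΨd x)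
  have hdecrease : ∀ i x, x ≠ 0 → ∃ u, V (modeStep A B i x u) ≤ ENNReal.ofReal γ₂ * V x :=
    fun i x hx => exists_memValue_modeStep_le A B _ (by simpa using hγ₁0) ENNReal.ofReal_ne_top
      ((ENNReal.ofReal_lt_ofReal_iff (hγ₁0.trans hγ₁γ₂)).2 hγ₁γ₂) i
      ((enorm_pos.2 hx).trans_le (hlow x)).ne' ((hup x).trans_lt (by finiteness)).ne
  choose Φd hΦd_smul hΦd using fun i => exists_homogeneous_selection (K := ℝ)
    (fun x u => V (modeStep A B i x u) ≤ ENNReal.ofReal γ₂ * V x)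
    (by simp [modeStep, V, memValue_zero])
    (fun c hc x u hxu => by
      simp only [modeStep_smul, V, memValue_smul A B _ hc, mul_left_comm _ ‖c‖ₑ]
      gcongr)
    (hdecrease i)
  refine ⟨Φd, hΦd_smul, M, hM, γ₂, ⟨(hγ₁0.trans hγ₁γ₂).le, hγ₂1⟩, fun x σ hx k => ?_⟩
  have hstep : ∀ k, x (k + 1) = modeStep A B (σ k) (x k) (Φd (σ k) (x k)) := fun k =>
    congrArg (WithLp.toLp 2) (hx k)
  exact norm_le_of_lyapunov hM.le (hγ₁0.trans hγ₁γ₂).le hlow hup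
    (fun k => (hstep k).symm ▸ hΦd (σ k) (x k)) k

/-- If the system is current-mode-dependent memory-feedback
stabilizable, then it is stabilizable by a static mode-dependent feedback that is
homogeneous of degree one in the state. -/
theorem dfs_mem_implies_homogeneous_static {n m : ℕ} (hn : 0 < n) (hm : 0 < m) {S : Type*} [Fintype S] [Nonempty S]
    (A : S → Matrix (Fin n) (Fin n) ℝ) (B : S → Matrix (Fin n) (Fin m) ℝ)
    (h : ∃ M > (0 : ℝ), ∃ γ ∈ Set.Ico (0 : ℝ) 1,
      ∃ Ψd : List (EuclideanSpace ℝ (Fin n)) → List S → EuclideanSpace ℝ (Fin m),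
        ∀ (x0 : EuclideanSpace ℝ (Fin n)) (σ : ℕ → S) (k : ℕ),
          ‖memTrajD A B Ψd x0 σ k‖ ≤ M * γ ^ k * ‖x0‖) :
    ∃ Φd : S → EuclideanSpace ℝ (Fin n) → EuclideanSpace ℝ (Fin m),
      (∀ (i : S) (lam : ℝ) (x : EuclideanSpace ℝ (Fin n)), Φd i (lam • x) = lam • Φd i x) ∧
      ∃ M > (0 : ℝ), ∃ γ' ∈ Set.Ico (0 : ℝ) 1,
        ∀ (x : ℕ → EuclideanSpace ℝ (Fin n)) (σ : ℕ → S),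
          (∀ k, x (k + 1) = (A (σ k)).mulVec (x k) + (B (σ k)).mulVec (Φd (σ k) (x k))) →
          ∀ k, ‖x k‖ ≤ M * γ' ^ k * ‖x 0‖ :=
  dfs_mem_implies_homogeneous_static_general A B h
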